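/- arXiv:2605.01090 — 4 statements merged into one kernel-verified Lean document; each statement's English description precedes it below -/
import Mathlib

section
/- (Theorem 1, ultimate boundedness.) If w̄ := sup_{j ∈ ℕ} ‖w j‖ is finite, then the sequence (ξ m) is uniformly ultimately bounded and limsup_{m→∞} ‖ξ m‖ ≤ √(a4·a2/(a1·ā3))·w̄, where ā3 := min(a3, a2/2). -/
/-!
With `ā₃ := min a₃ (a₂/2)` and `w̄ := sup ‖w j‖`, the upper bound `V ≤ a₂‖ξ‖²` turns the decrease
condition into the contraction `V(ξ(m+1)) ≤ q V(ξ m) + a₄ w̄²` with `q = 1 - ā₃/a₂ ∈ [1/2, 1)`.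
Hence `V(ξ m) - L ≤ qᵐ (V(ξ 0) - L)` for the fixed point `L = a₄ w̄² / (1 - q) = a₄ a₂ w̄² / ā₃`,
and the lower bound `a₁‖ξ‖² ≤ V` gives `‖ξ m‖ ≤ √((qᵐ (V(ξ 0) - L) + L) / a₁) → √(L / a₁)`.
-/

open Filter Topology

theorem le_one_sub_div_mul_add_of_sub_le {v v' s t W a2 a3 a4 b : ℝ}
    (ha2 : 0 < a2) (hb : 0 ≤ b) (hba3 : b ≤ a3) (ha4 : 0 ≤ a4) (hs : 0 ≤ s)
    (hup : v ≤ a2 * s) (hdec : v' - v ≤ -a3 * s + a4 * t) (ht : t ≤ W) :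
    v' ≤ (1 - b / a2) * v + a4 * W := by
  have hvs : b / a2 * v ≤ b * s := by
    rw [div_mul_eq_mul_div, div_le_iff₀ ha2]
    nlinarith
  nlinarith

theorem sub_le_pow_mul_sub_of_le_mul_add {v : ℕ → ℝ} {q c : ℝ} (hq : 0 ≤ q) (hq1 : q ≠ 1)
    (h : ∀ n, v (n + 1) ≤ q * v n + c) (n : ℕ) :
    v n - c / (1 - q) ≤ q ^ n * (v 0 - c / (1 - q)) := by
  have hfix : q * (c / (1 - q)) + c = c / (1 - q) := by
    field_simp [sub_ne_zero.mpr hq1.symm]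
    ring
  induction n with
  | zero => simp
  | succ n ih =>
    calc v (n + 1) - c / (1 - q) ≤ q * (v n - c / (1 - q)) := by linarith [h n]
      _ ≤ q * (q ^ n * (v 0 - c / (1 - q))) := mul_le_mul_of_nonneg_left ih hq
      _ = q ^ (n + 1) * (v 0 - c / (1 - q)) := by ring

theorem tendsto_pow_mul_add {q a L : ℝ} (hq : 0 ≤ q) (hq1 : q < 1) :
    Tendsto (fun n : ℕ => q ^ n * a + L) atTop (𝓝 L) := by
  simpa using ((tendsto_pow_atTop_nhds_zero_of_lt_one hq hq1).mul_const a).add_const L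

theorem isBoundedUnder_le_and_limsup_le_of_le_of_tendsto {ι : Type*} {l : Filter ι} [l.NeBot]
    {u g : ι → ℝ} {L : ℝ} (hu : IsBoundedUnder (· ≥ ·) l u) (hug : ∀ i, u i ≤ g i)
    (hg : Tendsto g l (𝓝 L)) :
    IsBoundedUnder (· ≤ ·) l u ∧ limsup u l ≤ L := by
  have hgb : IsBoundedUnder (· ≤ ·) l g := hg.isBoundedUnder_le
  refine ⟨hgb.mono_le (Eventually.of_forall hug), ?_⟩
  calc limsup u l ≤ limsup g l :=
        limsup_le_limsup (Eventually.of_forall hug) hu.isCoboundedUnder_le hgb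
    _ = L := hg.limsup_eq

/-- Theorem 1 (ultimate boundedness for APID): if `w̄ := sup_j ‖w j‖` is finite,
then `ξ` is uniformly ultimately bounded and
`limsup_{m→∞} ‖ξ m‖ ≤ √(a4·a2/(a1·ā3))·w̄`, with `ā3 := min(a3, a2/2)`. -/
theorem apid_ultimate_bound
    {E F : Type*} [NormedAddCommGroup E] [NormedSpace ℝ E]
    [NormedAddCommGroup F] [NormedSpace ℝ F]
    (ξ : ℕ → E) (w : ℕ → F) (V : E → ℝ) (a1 a2 a3 a4 : ℝ)
    (ha1 : 0 < a1) (ha2 : 0 < a2) (ha3 : 0 < a3) (ha4 : 0 < a4)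
    (hlow : ∀ m, a1 * ‖ξ m‖ ^ 2 ≤ V (ξ m))
    (hup : ∀ m, V (ξ m) ≤ a2 * ‖ξ m‖ ^ 2)
    (hdec : ∀ m, V (ξ (m + 1)) - V (ξ m) ≤ -a3 * ‖ξ m‖ ^ 2 + a4 * ‖w m‖ ^ 2)
    (hwbdd : BddAbove (Set.range fun j => ‖w j‖)) :
    (∃ B : ℝ, ∀ᶠ m in Filter.atTop, ‖ξ m‖ ≤ B) ∧
      Filter.limsup (fun m => ‖ξ m‖) Filter.atTop
        ≤ Real.sqrt (a4 * a2 / (a1 * min a3 (a2 / 2))) * (⨆ j, ‖w j‖) := by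
  set b := min a3 (a2 / 2)
  set wbar := ⨆ j, ‖w j‖
  have hb : 0 < b := lt_min ha3 (half_pos ha2)
  have hba2 : b / a2 ≤ 1 / 2 := by
    rw [div_le_iff₀ ha2]; linarith [min_le_right a3 (a2 / 2)]
  set q := 1 - b / a2
  have hq : 0 ≤ q := by linarith
  have hq1 : q < 1 := by linarith [div_pos hb ha2]
  have hwbar : 0 ≤ wbar := (norm_nonneg _).trans (le_ciSup hwbdd 0)
  have hstep (m : ℕ) : V (ξ (m + 1)) ≤ q * V (ξ m) + a4 * wbar ^ 2 :=
    le_one_sub_div_mul_add_of_sub_le ha2 hb.le (min_le_left _ _) ha4.le (sq_nonneg _) (hup m)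
      (hdec m) (pow_le_pow_left₀ (norm_nonneg _) (le_ciSup hwbdd m) 2)
  set L := a4 * wbar ^ 2 / (1 - q)
  have hξ (m : ℕ) : ‖ξ m‖ ≤ √((q ^ m * (V (ξ 0) - L) + L) / a1) := by
    refine Real.le_sqrt_of_sq_le ((le_div_iff₀ ha1).mpr ?_)
    linarith [hlow m, sub_le_pow_mul_sub_of_le_mul_add (v := fun m => V (ξ m)) hq hq1.ne hstep m]
  have hlim : Tendsto (fun m => √((q ^ m * (V (ξ 0) - L) + L) / a1)) atTop
      (𝓝 (√(a4 * a2 / (a1 * b)) * wbar)) := by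
    have hL : L / a1 = a4 * a2 / (a1 * b) * wbar ^ 2 := by
      simp only [L, q, sub_sub_cancel]
      field_simp
    rw [← Real.sqrt_sq hwbar, ← Real.sqrt_mul' _ (sq_nonneg _), ← hL]
    exact ((tendsto_pow_mul_add hq hq1).div_const a1).sqrt
  obtain ⟨hbdd, hlimsup⟩ := isBoundedUnder_le_and_limsup_le_of_le_of_tendsto
    (isBoundedUnder_of_eventually_ge (Eventually.of_forall fun m => norm_nonneg (ξ m))) hξ hlim
  exact ⟨hbdd.eventually_le, hlimsup⟩
end

section
/- (Theorem 2, ultimate boundedness.) Under the stated assumptions, if w̄ := sup_{j ∈ ℕ} ‖w j‖ is finite, then there exists a constant C2 > 0 (depending only on the constants in the assumptions) such that limsup_{m→∞} √(‖χ m‖² + ‖φ m − φ*‖²) ≤ C2·w̄. -/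
/-!
Strong monotonicity and the growth bound make the gradient step `u ↦ u - a • g` a contraction of
the gain error with factor `ρ = √(1 - αlo (2μ - αhi L²)) < 1`, and the metric projection onto the
convex set `Φ ∋ φ*` is nonexpansive towards `φ*`; hence `‖φ (m+1) - φ*‖ ≤ ρ ‖φ m - φ*‖ + αhi w̄`.
Squaring this (convexity of `t ↦ t²`) and adding `θ = 2 b4 / (1 - ρ)` times it to the plant
Lyapunov inequality absorbs the coupling term `b4 ‖φ m - φ*‖²`: the composite Lyapunov function
`W = V_y(χ) + θ ‖φ - φ*‖²` satisfies `W (m+1) ≤ λ W m + C w̄²` with `λ < 1`, so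
`limsup W ≤ C w̄² / (1 - λ)`, and `W` dominates a multiple of `‖χ‖² + ‖φ - φ*‖²`.
-/

open Filter Topology
open scoped RealInnerProductSpace

theorem sq_mul_add_le {ρ x y : ℝ} (hρ0 : 0 ≤ ρ) (hρ1 : ρ < 1) :
    (ρ * x + y) ^ 2 ≤ ρ * x ^ 2 + y ^ 2 / (1 - ρ) := by
  have h1 : 0 < 1 - ρ := by linarith
  rw [← sub_nonneg]
  -- the gap is `ρ ((1 - ρ) x - y)² / (1 - ρ)`: convexity of the square with weights `ρ, 1 - ρ`
  have : ρ * x ^ 2 + y ^ 2 / (1 - ρ) - (ρ * x + y) ^ 2 = ρ * ((1 - ρ) * x - y) ^ 2 / (1 - ρ) := by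
    field_simp; ring
  rw [this]; positivity

theorem le_mul_two_mul_sub_mul_sq {a αlo αhi μ L : ℝ} (hlo : αlo ≤ a) (hhi : a ≤ αhi)
    (hαlo : 0 ≤ αlo) (hαhi : αhi * L ^ 2 ≤ 2 * μ) :
    αlo * (2 * μ - αhi * L ^ 2) ≤ a * (2 * μ - a * L ^ 2) := by
  have h1 : αlo * (2 * μ - αhi * L ^ 2) ≤ a * (2 * μ - αhi * L ^ 2) := by gcongr
  have h2 : a * (2 * μ - αhi * L ^ 2) ≤ a * (2 * μ - a * L ^ 2) := by
    gcongr; linarith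
  linarith

theorem le_one_sub_div_mul_add {V V' c e b2 b3 : ℝ} (hb2 : 0 < b2) (hb3 : 0 ≤ b3)
    (hup : V ≤ b2 * c) (hdec : V' - V ≤ -b3 * c + e) : V' ≤ (1 - b3 / b2) * V + e := by
  have : b3 / b2 * V ≤ b3 * c :=
    calc b3 / b2 * V ≤ b3 / b2 * (b2 * c) := by gcongr
      _ = b3 * c := by field_simp
  linarith

theorem add_mul_le_max_mul_add_of_le {V V' P P' s ρ b e d : ℝ} (hV : 0 ≤ V) (hP : 0 ≤ P)
    (hb : 0 ≤ b) (hρ : ρ < 1) (hV' : V' ≤ s * V + b * P + e) (hP' : P' ≤ ρ * P + d) :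
    V' + 2 * b / (1 - ρ) * P' ≤
      max s ((1 + ρ) / 2) * (V + 2 * b / (1 - ρ) * P) + (e + 2 * b / (1 - ρ) * d) := by
  set θ := 2 * b / (1 - ρ)
  have hθ : 0 ≤ θ := div_nonneg (by linarith) (by linarith)
  -- `θ` is chosen so that the coupling term `b P` is absorbed: `b + θ ρ = θ (1 + ρ) / 2`
  have hθb : b + θ * ρ = (1 + ρ) / 2 * θ := by
    simp only [θ]; field_simp [(by linarith : (1 - ρ) ≠ 0)]; ring
  have hs : s * V ≤ max s ((1 + ρ) / 2) * V := by gcongr; exact le_max_left _ _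
  have hρ' : (1 + ρ) / 2 * θ * P ≤ max s ((1 + ρ) / 2) * θ * P := by
    gcongr; exact le_max_right _ _
  nlinarith [mul_le_mul_of_nonneg_left hP' hθ]

theorem le_div_add_pow_mul_of_le_mul_add {x : ℕ → ℝ} {l c : ℝ} (hl0 : 0 ≤ l) (hl1 : l ≠ 1)
    (hx : ∀ m, x (m + 1) ≤ l * x m + c) (m : ℕ) :
    x m ≤ c / (1 - l) + l ^ m * (x 0 - c / (1 - l)) := by
  have hK : l * (c / (1 - l)) + c = c / (1 - l) := by
    field_simp [sub_ne_zero.mpr hl1.symm]; ring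
  induction m with
  | zero => simp
  | succ m ih =>
    calc x (m + 1) ≤ l * x m + c := hx m
      _ ≤ l * (c / (1 - l) + l ^ m * (x 0 - c / (1 - l))) + c := by gcongr
      _ = c / (1 - l) + l ^ (m + 1) * (x 0 - c / (1 - l)) := by linear_combination hK

theorem limsup_le_of_le_comp_of_le_mul_add {x y : ℕ → ℝ} {f : ℝ → ℝ} {l c : ℝ}
    (hl0 : 0 ≤ l) (hl1 : l < 1) (hx : ∀ m, x (m + 1) ≤ l * x m + c) (hf : Monotone f)
    (hfc : ContinuousAt f (c / (1 - l))) (hy0 : ∀ m, 0 ≤ y m) (hy : ∀ m, y m ≤ f (x m)) :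
    limsup y atTop ≤ f (c / (1 - l)) := by
  set B : ℕ → ℝ := fun m => c / (1 - l) + l ^ m * (x 0 - c / (1 - l))
  have hB : Tendsto (fun m => f (B m)) atTop (𝓝 (f (c / (1 - l)))) := by
    refine hfc.tendsto.comp ?_
    simpa using ((tendsto_pow_atTop_nhds_zero_of_lt_one hl0 hl1).mul_const
      (x 0 - c / (1 - l))).const_add (c / (1 - l))
  calc limsup y atTop ≤ limsup (fun m => f (B m)) atTop :=
        limsup_le_limsup (Eventually.of_forall fun m =>
          (hy m).trans (hf (le_div_add_pow_mul_of_le_mul_add hl0 hl1.ne hx m)))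
          (isBoundedUnder_of ⟨0, hy0⟩).isCoboundedUnder_le hB.isBoundedUnder_le
    _ = f (c / (1 - l)) := hB.limsup_eq

theorem exists_limsup_sqrt_add_le_mul_of_le {V c P : ℕ → ℝ} {s ρ b b' E D ω : ℝ}
    (hb' : 0 < b') (hb : 0 < b) (hs : s < 1) (hρ0 : 0 ≤ ρ) (hρ1 : ρ < 1) (hE : 0 < E)
    (hD : 0 ≤ D) (hω : 0 ≤ ω) (hc0 : ∀ m, 0 ≤ c m) (hc : ∀ m, b' * c m ≤ V m)
    (hP0 : ∀ m, 0 ≤ P m) (hV : ∀ m, V (m + 1) ≤ s * V m + b * P m + E * ω ^ 2)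
    (hP : ∀ m, P (m + 1) ≤ ρ * P m + D * ω ^ 2) :
    ∃ C > 0, limsup (fun m => √(c m + P m)) atTop ≤ C * ω := by
  set θ := 2 * b / (1 - ρ)
  set l := max s ((1 + ρ) / 2)
  have hθ : 0 < θ := div_pos (by positivity) (by linarith)
  have hβ : 0 < min b' θ := lt_min hb' hθ
  have hl0 : 0 ≤ l := le_max_of_le_right (by linarith)
  have hl1 : l < 1 := max_lt hs (by linarith)
  have hW : ∀ m, V (m + 1) + θ * P (m + 1) ≤ l * (V m + θ * P m) + (E + θ * D) * ω ^ 2 :=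
    fun m => by
      have := add_mul_le_max_mul_add_of_le ((mul_nonneg hb'.le (hc0 m)).trans (hc m)) (hP0 m)
        hb.le hρ1 (hV m) (hP m)
      exact this.trans_eq (by ring)
  have hy : ∀ m, √(c m + P m) ≤ √((V m + θ * P m) / min b' θ) := fun m => by
    refine Real.sqrt_le_sqrt ((le_div_iff₀' hβ).mpr ?_)
    nlinarith [hc m, hc0 m, hP0 m, mul_le_mul_of_nonneg_right (min_le_left b' θ) (hc0 m),
      mul_le_mul_of_nonneg_right (min_le_right b' θ) (hP0 m)]
  refine ⟨√((E + θ * D) / ((1 - l) * min b' θ)), by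
    have : 0 < 1 - l := by linarith
    positivity, ?_⟩
  calc limsup (fun m => √(c m + P m)) atTop
      ≤ √((E + θ * D) * ω ^ 2 / (1 - l) / min b' θ) :=
        limsup_le_of_le_comp_of_le_mul_add (f := fun t => √(t / min b' θ)) hl0 hl1 hW
          (fun _ _ h => Real.sqrt_le_sqrt (by gcongr))
          (Real.continuous_sqrt.comp (continuous_id.div_const _)).continuousAt
          (fun _ => Real.sqrt_nonneg _) hy
    _ = √((E + θ * D) / ((1 - l) * min b' θ)) * ω := by
        rw [← Real.sqrt_sq hω, ← Real.sqrt_mul' _ (sq_nonneg _), Real.sqrt_sq hω]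
        congr 1; field_simp

noncomputable def gainContraction (αlo αhi μ L : ℝ) : ℝ := √(1 - αlo * (2 * μ - αhi * L ^ 2))

theorem gainContraction_lt_one {αlo αhi μ L : ℝ} (hαlo : 0 < αlo) (hL2 : αhi * L ^ 2 < 2 * μ) :
    gainContraction αlo αhi μ L < 1 :=
  (Real.sqrt_lt' one_pos).mpr (by nlinarith [mul_pos hαlo (sub_pos.mpr hL2)])

section InnerProductSpace

variable {H : Type*} [NormedAddCommGroup H] [InnerProductSpace ℝ H]

theorem Convex.norm_sub_le_of_forall_norm_sub_le {Φ : Set H} (hΦ : Convex ℝ Φ) {x p z : H}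
    (hp : p ∈ Φ) (hz : z ∈ Φ) (hmin : ∀ y ∈ Φ, ‖x - p‖ ≤ ‖x - y‖) : ‖p - z‖ ≤ ‖x - z‖ := by
  have : Nonempty Φ := ⟨⟨p, hp⟩⟩
  have hinf : ‖x - p‖ = ⨅ y : Φ, ‖x - y‖ :=
    le_antisymm (le_ciInf fun y => hmin y y.2)
      (ciInf_le ⟨0, by rintro _ ⟨y, rfl⟩; positivity⟩ (⟨p, hp⟩ : Φ))
  have hvar : ⟪x - p, z - p⟫ ≤ 0 := (norm_eq_iInf_iff_real_inner_le_zero hΦ hp).mp hinf z hz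
  have hsq : ‖x - z‖ ^ 2 = ‖x - p‖ ^ 2 - 2 * ⟪x - p, z - p⟫ + ‖p - z‖ ^ 2 := by
    rw [norm_sub_rev p z, ← norm_sub_sq_real, sub_sub_sub_cancel_right]
  nlinarith [sq_nonneg ‖x - p‖, norm_nonneg (p - z), norm_nonneg (x - z)]

theorem norm_sub_smul_le_sqrt_mul_norm {u g : H} {a μ L : ℝ}
    (hmono : μ * ‖u‖ ^ 2 ≤ ⟪g, u⟫) (hgrow : ‖g‖ ≤ L * ‖u‖) (ha : 0 ≤ a) :
    ‖u - a • g‖ ≤ √(1 - a * (2 * μ - a * L ^ 2)) * ‖u‖ := by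
  have hg2 : ‖g‖ ^ 2 ≤ (L * ‖u‖) ^ 2 := pow_le_pow_left₀ (norm_nonneg g) hgrow 2
  have hsq : ‖u - a • g‖ ^ 2 ≤ (1 - a * (2 * μ - a * L ^ 2)) * ‖u‖ ^ 2 := by
    rw [norm_sub_sq_real, real_inner_smul_right, norm_smul, mul_pow, Real.norm_eq_abs, sq_abs,
      real_inner_comm]
    nlinarith [mul_le_mul_of_nonneg_left hmono ha, mul_le_mul_of_nonneg_left hg2 (sq_nonneg a)]
  calc ‖u - a • g‖ = √(‖u - a • g‖ ^ 2) := (Real.sqrt_sq (norm_nonneg _)).symm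
    _ ≤ √((1 - a * (2 * μ - a * L ^ 2)) * ‖u‖ ^ 2) := Real.sqrt_le_sqrt hsq
    _ = √(1 - a * (2 * μ - a * L ^ 2)) * ‖u‖ := by
      rw [Real.sqrt_mul' _ (sq_nonneg _), Real.sqrt_sq (norm_nonneg _)]

theorem norm_proj_sub_smul_add_sub_le {Φ : Set H} (hΦ : Convex ℝ Φ) {proj : H → H}
    (hproj : ∀ x, proj x ∈ Φ ∧ ∀ y ∈ Φ, ‖x - proj x‖ ≤ ‖x - y‖) {φ φstar g r : H} {a μ L : ℝ}
    (hφstar : φstar ∈ Φ) (ha : 0 ≤ a) (hmono : μ * ‖φ - φstar‖ ^ 2 ≤ ⟪g, φ - φstar⟫)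
    (hgrow : ‖g‖ ≤ L * ‖φ - φstar‖) :
    ‖proj (φ - a • (g + r)) - φstar‖ ≤ √(1 - a * (2 * μ - a * L ^ 2)) * ‖φ - φstar‖ + a * ‖r‖ :=
  calc ‖proj (φ - a • (g + r)) - φstar‖ ≤ ‖φ - a • (g + r) - φstar‖ :=
        hΦ.norm_sub_le_of_forall_norm_sub_le (hproj _).1 hφstar (hproj _).2
    _ = ‖(φ - φstar - a • g) - a • r‖ := by congr 1; module
    _ ≤ ‖φ - φstar - a • g‖ + ‖a • r‖ := norm_sub_le _ _
    _ ≤ √(1 - a * (2 * μ - a * L ^ 2)) * ‖φ - φstar‖ + a * ‖r‖ := by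
      rw [norm_smul, Real.norm_of_nonneg ha]
      gcongr
      exact norm_sub_smul_le_sqrt_mul_norm hmono hgrow ha

theorem norm_proj_sub_sq_le {Φ : Set H} (hΦ : Convex ℝ Φ) {proj : H → H}
    (hproj : ∀ x, proj x ∈ Φ ∧ ∀ y ∈ Φ, ‖x - proj x‖ ≤ ‖x - y‖) {φ φstar g r : H}
    {a αlo αhi μ L ω : ℝ} (hφstar : φstar ∈ Φ) (hαlo : 0 < αlo) (hL2 : αhi * L ^ 2 < 2 * μ)
    (hlo : αlo ≤ a) (hhi : a ≤ αhi) (hmono : μ * ‖φ - φstar‖ ^ 2 ≤ ⟪g, φ - φstar⟫)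
    (hgrow : ‖g‖ ≤ L * ‖φ - φstar‖) (hr : ‖r‖ ≤ ω) :
    ‖proj (φ - a • (g + r)) - φstar‖ ^ 2 ≤ gainContraction αlo αhi μ L * ‖φ - φstar‖ ^ 2
      + αhi ^ 2 / (1 - gainContraction αlo αhi μ L) * ω ^ 2 := by
  have hnorm : ‖proj (φ - a • (g + r)) - φstar‖ ≤
      gainContraction αlo αhi μ L * ‖φ - φstar‖ + αhi * ω := by
    refine (norm_proj_sub_smul_add_sub_le hΦ hproj hφstar (hαlo.le.trans hlo) hmono hgrow).trans ?_
    gcongr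
    · exact Real.sqrt_le_sqrt (by linarith [le_mul_two_mul_sub_mul_sq hlo hhi hαlo.le hL2.le])
    · linarith
  calc ‖proj (φ - a • (g + r)) - φstar‖ ^ 2
      ≤ (gainContraction αlo αhi μ L * ‖φ - φstar‖ + αhi * ω) ^ 2 := by gcongr
    _ ≤ _ := sq_mul_add_le (Real.sqrt_nonneg _) (gainContraction_lt_one hαlo hL2)
    _ = _ := by ring

end InnerProductSpace

theorem rapid_ultimate_bound_general
    {E1 F H : Type*} [NormedAddCommGroup E1]
    [NormedAddCommGroup F]
    [NormedAddCommGroup H] [InnerProductSpace ℝ H]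
    (χ : ℕ → E1) (w : ℕ → F) (φ : ℕ → H)
    (Vy : E1 → ℝ) (b1 b2 b3 b4 b5 : ℝ)
    (hb1 : 0 < b1) (hb2 : 0 < b2) (hb3 : 0 < b3) (hb4 : 0 < b4) (hb5 : 0 < b5)
    (φstar : H)
    (hVlow : ∀ m, b1 * ‖χ m‖ ^ 2 ≤ Vy (χ m))
    (hVup : ∀ m, Vy (χ m) ≤ b2 * ‖χ m‖ ^ 2)
    (hVdec : ∀ m, Vy (χ (m + 1)) - Vy (χ m)
      ≤ -b3 * ‖χ m‖ ^ 2 + b4 * ‖φ m - φstar‖ ^ 2 + b5 * ‖w m‖ ^ 2)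
    (Φ : Set H) (hconv : Convex ℝ Φ)
    (hφstar : φstar ∈ Φ)
    (proj : H → H)
    (hproj : ∀ x, proj x ∈ Φ ∧ ∀ y ∈ Φ, ‖x - proj x‖ ≤ ‖x - y‖)
    (g r : ℕ → H) (hr : ∀ m, ‖r m‖ ≤ ‖w m‖)
    (α : ℕ → ℝ) (μ L αlo αhi : ℝ)
    (hL : 0 < L)
    (hαlo : 0 < αlo) (hαhi : αhi < 2 * μ / L ^ 2)
    (hα : ∀ m, αlo ≤ α m ∧ α m ≤ αhi)
    (hupd : ∀ m, φ (m + 1) = proj (φ m - α m • (g m + r m)))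
    (hmono : ∀ m, μ * ‖φ m - φstar‖ ^ 2 ≤ @inner ℝ H _ (g m) (φ m - φstar))
    (hgrow : ∀ m, ‖g m‖ ≤ L * ‖φ m - φstar‖)
    (hwbdd : BddAbove (Set.range fun j => ‖w j‖)) :
    ∃ C2 > (0 : ℝ),
      Filter.limsup (fun m => Real.sqrt (‖χ m‖ ^ 2 + ‖φ m - φstar‖ ^ 2))
          Filter.atTop
        ≤ C2 * (⨆ j, ‖w j‖) := by
  have hwle : ∀ m, ‖w m‖ ≤ ⨆ j, ‖w j‖ := le_ciSup hwbdd
  have hL2 : αhi * L ^ 2 < 2 * μ := (lt_div_iff₀ (by positivity)).mp hαhi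
  have hgain : ∀ m, ‖φ (m + 1) - φstar‖ ^ 2 ≤ gainContraction αlo αhi μ L * ‖φ m - φstar‖ ^ 2
      + αhi ^ 2 / (1 - gainContraction αlo αhi μ L) * (⨆ j, ‖w j‖) ^ 2 := fun m => by
    rw [hupd]
    exact norm_proj_sub_sq_le hconv hproj hφstar hαlo hL2 (hα m).1 (hα m).2 (hmono m) (hgrow m)
      ((hr m).trans (hwle m))
  have hplant : ∀ m, Vy (χ (m + 1)) ≤
      (1 - b3 / b2) * Vy (χ m) + b4 * ‖φ m - φstar‖ ^ 2 + b5 * (⨆ j, ‖w j‖) ^ 2 := fun m => by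
    have hw : b5 * ‖w m‖ ^ 2 ≤ b5 * (⨆ j, ‖w j‖) ^ 2 := by gcongr; exact hwle m
    exact (le_one_sub_div_mul_add (e := b4 * ‖φ m - φstar‖ ^ 2 + b5 * (⨆ j, ‖w j‖) ^ 2) hb2
      hb3.le (hVup m) ((hVdec m).trans (by linarith))).trans_eq (by ring)
  exact exists_limsup_sqrt_add_le_mul_of_le hb1 hb4 (by linarith [div_pos hb3 hb2])
    (Real.sqrt_nonneg _) (gainContraction_lt_one hαlo hL2) hb5
    (div_nonneg (sq_nonneg _) (by linarith [gainContraction_lt_one hαlo hL2]))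
    ((norm_nonneg _).trans (hwle 0)) (fun _ => sq_nonneg _) hVlow (fun _ => sq_nonneg _)
    hplant hgain

/-- Theorem 2 (ultimate boundedness for RAPID): if `w̄ := sup_j ‖w j‖` is
finite, then there is a constant `C2 > 0` such that
`limsup_{m→∞} √(‖χ m‖² + ‖φ m − φ*‖²) ≤ C2·w̄`. -/
theorem rapid_ultimate_bound
    {E1 F H : Type*} [NormedAddCommGroup E1] [NormedSpace ℝ E1]
    [NormedAddCommGroup F] [NormedSpace ℝ F]
    [NormedAddCommGroup H] [InnerProductSpace ℝ H] [CompleteSpace H]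
    (χ : ℕ → E1) (w : ℕ → F) (φ : ℕ → H)
    (Vy : E1 → ℝ) (b1 b2 b3 b4 b5 : ℝ)
    (hb1 : 0 < b1) (hb2 : 0 < b2) (hb3 : 0 < b3) (hb4 : 0 < b4) (hb5 : 0 < b5)
    (φstar : H)
    (hVlow : ∀ m, b1 * ‖χ m‖ ^ 2 ≤ Vy (χ m))
    (hVup : ∀ m, Vy (χ m) ≤ b2 * ‖χ m‖ ^ 2)
    (hVdec : ∀ m, Vy (χ (m + 1)) - Vy (χ m)
      ≤ -b3 * ‖χ m‖ ^ 2 + b4 * ‖φ m - φstar‖ ^ 2 + b5 * ‖w m‖ ^ 2)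
    (Φ : Set H) (hne : Φ.Nonempty) (hclosed : IsClosed Φ) (hconv : Convex ℝ Φ)
    (hφstar : φstar ∈ Φ) (hφ0 : φ 0 ∈ Φ)
    (proj : H → H)
    (hproj : ∀ x, proj x ∈ Φ ∧ ∀ y ∈ Φ, ‖x - proj x‖ ≤ ‖x - y‖)
    (g r : ℕ → H) (hr : ∀ m, ‖r m‖ ≤ ‖w m‖)
    (α : ℕ → ℝ) (μ L αlo αhi : ℝ)
    (hμ : 0 < μ) (hL : 0 < L)
    (hαlo : 0 < αlo) (hαle : αlo ≤ αhi) (hαhi : αhi < 2 * μ / L ^ 2)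
    (hα : ∀ m, αlo ≤ α m ∧ α m ≤ αhi)
    (hupd : ∀ m, φ (m + 1) = proj (φ m - α m • (g m + r m)))
    (hmono : ∀ m, μ * ‖φ m - φstar‖ ^ 2 ≤ @inner ℝ H _ (g m) (φ m - φstar))
    (hgrow : ∀ m, ‖g m‖ ≤ L * ‖φ m - φstar‖)
    (hwbdd : BddAbove (Set.range fun j => ‖w j‖)) :
    ∃ C2 > (0 : ℝ),
      Filter.limsup (fun m => Real.sqrt (‖χ m‖ ^ 2 + ‖φ m - φstar‖ ^ 2))
          Filter.atTop
        ≤ C2 * (⨆ j, ‖w j‖) :=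
  rapid_ultimate_bound_general χ w φ Vy b1 b2 b3 b4 b5 hb1 hb2 hb3 hb4 hb5 φstar hVlow hVup hVdec Φ
    hconv hφstar proj hproj g r hr α μ L αlo αhi hL hαlo hαhi hα hupd hmono hgrow hwbdd
end

section
/- (Theorem 2, tracking-error bound.) Under the stated assumptions, if w̄ := sup_{j ∈ ℕ} ‖w j‖ is finite, then there exists a constant C_e > 0 such that limsup_{m→∞} |e m| ≤ C_e·w̄; in particular the sampled RAPID tracking error is ultimately bounded by a disturbance-dependent constant. -/
/-!
The projected gradient step contracts the gain error `φ̃ m := φ m - φ*`: strong monotonicity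
and the growth bound give `‖φ̃ (m+1)‖ ≤ κ ‖φ̃ m‖ + α_hi ‖w m‖` with `κ < 1`, the projection being
nonexpansive towards `φ* ∈ Φ`. The plant Lyapunov function is driven by `‖φ̃‖²`, so the two errors
form a cascade of contracting recursions, and the composite function `W := V_y(χ) + c ‖φ̃‖²` obeys
`W (m+1) ≤ ρ W m + K w̄²` with `ρ < 1`. Hence `limsup W ≤ K w̄² / (1 - ρ)`, and the bound on the
tracking error follows from `|e| ≤ L_h ‖χ‖ + ‖w‖ ≤ L_h √(W / b1) + w̄`.
-/

open Filter Topology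
open scoped InnerProductSpace

section ProjectedGradient

variable {H : Type*} [NormedAddCommGroup H] [InnerProductSpace ℝ H]

lemma norm_proj_sub_le {Φ : Set H} (hconv : Convex ℝ Φ) {proj : H → H}
    (hproj : ∀ x, proj x ∈ Φ ∧ ∀ y ∈ Φ, ‖x - proj x‖ ≤ ‖x - y‖) (x : H) {p : H} (hp : p ∈ Φ) :
    ‖proj x - p‖ ≤ ‖x - p‖ := by
  obtain ⟨hmem, hmin⟩ := hproj x
  have : Nonempty Φ := ⟨⟨p, hp⟩⟩
  have hinf : ‖x - proj x‖ = ⨅ y : Φ, ‖x - y‖ :=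
    le_antisymm (le_ciInf fun y => hmin y y.2)
      (ciInf_le (f := fun y : Φ => ‖x - y‖) ⟨0, by rintro _ ⟨y, rfl⟩; exact norm_nonneg _⟩
        ⟨proj x, hmem⟩)
  have hobtuse : ⟪x - proj x, p - proj x⟫_ℝ ≤ 0 :=
    (norm_eq_iInf_iff_real_inner_le_zero hconv hmem).1 hinf p hp
  have hflip : ⟪x - proj x, proj x - p⟫_ℝ = -⟪x - proj x, p - proj x⟫_ℝ := by
    rw [← inner_neg_right, neg_sub]
  have hsq : ‖proj x - p‖ ^ 2 ≤ ‖x - p‖ * ‖proj x - p‖ := by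
    calc ‖proj x - p‖ ^ 2 = ⟪(x - p) - (x - proj x), proj x - p⟫_ℝ := by
          rw [sub_sub_sub_cancel_left, real_inner_self_eq_norm_sq]
      _ ≤ ‖x - p‖ * ‖proj x - p‖ := by
        linarith [inner_sub_left (𝕜 := ℝ) (x - p) (x - proj x) (proj x - p),
          real_inner_le_norm (x - p) (proj x - p)]
  nlinarith [norm_nonneg (proj x - p), norm_nonneg (x - p)]

lemma norm_sub_smul_sq_le {v g : H} {μ L a : ℝ} (ha : 0 ≤ a)
    (hmono : μ * ‖v‖ ^ 2 ≤ ⟪g, v⟫_ℝ) (hgrow : ‖g‖ ≤ L * ‖v‖) :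
    ‖v - a • g‖ ^ 2 ≤ (1 - a * (2 * μ - a * L ^ 2)) * ‖v‖ ^ 2 := by
  have hg : ‖g‖ ^ 2 ≤ L ^ 2 * ‖v‖ ^ 2 := by
    rw [← mul_pow]; exact pow_le_pow_left₀ (norm_nonneg _) hgrow 2
  rw [norm_sub_sq_real, real_inner_smul_right, norm_smul, mul_pow, Real.norm_eq_abs, sq_abs,
    real_inner_comm]
  nlinarith [mul_le_mul_of_nonneg_left hmono ha, mul_le_mul_of_nonneg_left hg (sq_nonneg a)]

lemma norm_proj_gradient_step_sub_le {Φ : Set H} (hconv : Convex ℝ Φ) {proj : H → H}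
    (hproj : ∀ x, proj x ∈ Φ ∧ ∀ y ∈ Φ, ‖x - proj x‖ ≤ ‖x - y‖) {x p g r : H} (hp : p ∈ Φ)
    {μ L a ρ : ℝ} (ha : 0 ≤ a) (hmono : μ * ‖x - p‖ ^ 2 ≤ ⟪g, x - p⟫_ℝ)
    (hgrow : ‖g‖ ≤ L * ‖x - p‖) (hρ : 1 - a * (2 * μ - a * L ^ 2) ≤ ρ) :
    ‖proj (x - a • (g + r)) - p‖ ≤ √ρ * ‖x - p‖ + a * ‖r‖ := by
  have hdescent : ‖x - p - a • g‖ ≤ √ρ * ‖x - p‖ := by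
    rw [← Real.sqrt_sq (norm_nonneg (x - p)), ← Real.sqrt_mul' _ (sq_nonneg _)]
    refine Real.le_sqrt_of_sq_le ((norm_sub_smul_sq_le ha hmono hgrow).trans ?_)
    gcongr
  calc ‖proj (x - a • (g + r)) - p‖ ≤ ‖x - a • (g + r) - p‖ := norm_proj_sub_le hconv hproj _ hp
    _ = ‖(x - p - a • g) - a • r‖ := by rw [smul_add]; congr 1; abel
    _ ≤ ‖x - p - a • g‖ + ‖a • r‖ := norm_sub_le _ _
    _ ≤ √ρ * ‖x - p‖ + a * ‖r‖ := by rw [norm_smul, Real.norm_of_nonneg ha]; gcongr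

lemma exists_norm_gain_error_le {Φ : Set H} (hconv : Convex ℝ Φ) {proj : H → H}
    (hproj : ∀ x, proj x ∈ Φ ∧ ∀ y ∈ Φ, ‖x - proj x‖ ≤ ‖x - y‖) {φ g r : ℕ → H} {φstar : H}
    (hφstar : φstar ∈ Φ) {α : ℕ → ℝ} {μ L αlo αhi : ℝ} (hL : 0 < L) (hαlo : 0 < αlo)
    (hαhi : αhi < 2 * μ / L ^ 2) (hα : ∀ m, αlo ≤ α m ∧ α m ≤ αhi)
    (hupd : ∀ m, φ (m + 1) = proj (φ m - α m • (g m + r m)))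
    (hmono : ∀ m, μ * ‖φ m - φstar‖ ^ 2 ≤ ⟪g m, φ m - φstar⟫_ℝ)
    (hgrow : ∀ m, ‖g m‖ ≤ L * ‖φ m - φstar‖) :
    ∃ κ, 0 ≤ κ ∧ κ < 1 ∧ ∀ m, ‖φ (m + 1) - φstar‖ ≤ κ * ‖φ m - φstar‖ + αhi * ‖r m‖ := by
  have hgap : 0 < 2 * μ - αhi * L ^ 2 := by
    rw [lt_div_iff₀ (by positivity)] at hαhi; linarith
  refine ⟨√(1 - αlo * (2 * μ - αhi * L ^ 2)), Real.sqrt_nonneg _,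
    (Real.sqrt_lt' one_pos).2 (by rw [one_pow]; linarith [mul_pos hαlo hgap]), fun m => ?_⟩
  obtain ⟨hlo, hhi⟩ := hα m
  have ha : 0 ≤ α m := hαlo.le.trans hlo
  rw [hupd m]
  refine (norm_proj_gradient_step_sub_le (ρ := 1 - αlo * (2 * μ - αhi * L ^ 2)) hconv hproj hφstar
    ha (hmono m) (hgrow m) ?_).trans ?_
  · have : αlo * (2 * μ - αhi * L ^ 2) ≤ α m * (2 * μ - α m * L ^ 2) :=
      mul_le_mul hlo (by gcongr) hgap.le ha
    linarith
  · gcongr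

end ProjectedGradient

section Recursions

lemma sq_mul_add_le_of_lt_one {κ : ℝ} (hκ0 : 0 ≤ κ) (hκ1 : κ < 1) (x y : ℝ) :
    (κ * x + y) ^ 2 ≤ κ * x ^ 2 + y ^ 2 / (1 - κ) := by
  have h : 0 < 1 - κ := sub_pos.2 hκ1
  have key : κ * x ^ 2 + y ^ 2 / (1 - κ) - (κ * x + y) ^ 2 =
      κ * ((1 - κ) * x - y) ^ 2 / (1 - κ) := by
    field_simp
    ring
  nlinarith [key, div_nonneg (mul_nonneg hκ0 (sq_nonneg ((1 - κ) * x - y))) h.le]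

lemma le_one_sub_div_mul_add_of_sub_le_s14 {V V' x P b b' : ℝ} (hb : 0 < b) (hb' : 0 ≤ b')
    (hV : V ≤ b * x) (hdec : V' - V ≤ -b' * x + P) : V' ≤ (1 - b' / b) * V + P := by
  have : b' / b * V ≤ b' * x := by
    calc b' / b * V ≤ b' / b * (b * x) := by gcongr
      _ = b' * x := by field_simp
  linarith

variable {s : ℕ → ℝ} {q B : ℝ}

lemma le_pow_mul_add_of_le_mul_add (hq0 : 0 ≤ q) (hq1 : q < 1) (hB : 0 ≤ B)
    (hs : ∀ m, s (m + 1) ≤ q * s m + B) (m : ℕ) : s m ≤ q ^ m * s 0 + B / (1 - q) := by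
  induction m with
  | zero => simpa using div_nonneg hB (sub_pos.2 hq1).le
  | succ n ih =>
    calc s (n + 1) ≤ q * s n + B := hs n
      _ ≤ q * (q ^ n * s 0 + B / (1 - q)) + B := by gcongr
      _ = q ^ (n + 1) * s 0 + B / (1 - q) := by field_simp [(sub_pos.2 hq1).ne']; ring

lemma limsup_le_of_le_mul_add {u : ℕ → ℝ} {f : ℝ → ℝ} (hf : Monotone f)
    (hfc : ContinuousAt f (B / (1 - q))) (hq0 : 0 ≤ q) (hq1 : q < 1) (hB : 0 ≤ B)
    (hs : ∀ m, s (m + 1) ≤ q * s m + B) (hu0 : ∀ m, 0 ≤ u m) (hu : ∀ m, u m ≤ f (s m)) :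
    limsup u atTop ≤ f (B / (1 - q)) := by
  have hlim : Tendsto (fun m => f (q ^ m * s 0 + B / (1 - q))) atTop (𝓝 (f (B / (1 - q)))) := by
    have := ((tendsto_pow_atTop_nhds_zero_of_lt_one hq0 hq1).mul_const (s 0)).add_const
      (B / (1 - q))
    rw [zero_mul, zero_add] at this
    exact hfc.tendsto.comp this
  rw [← hlim.limsup_eq]
  exact limsup_le_limsup
    (Eventually.of_forall fun m => (hu m).trans (hf (le_pow_mul_add_of_le_mul_add hq0 hq1 hB hs m)))
    (isCoboundedUnder_le_of_le atTop hu0) hlim.isBoundedUnder_le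

-- The weight `c = b / (r - p)` absorbs the coupling term `b x` of the cascade: `b + c p = c r`.
lemma exists_cascade_le_mul_add {x z : ℕ → ℝ} {p b A : ℝ} (hp0 : 0 ≤ p) (hp1 : p < 1)
    (hq1 : q < 1) (hb : 0 ≤ b) (hz : ∀ m, 0 ≤ z m) (hx : ∀ m, x (m + 1) ≤ p * x m + A)
    (hzx : ∀ m, z (m + 1) ≤ q * z m + b * x m + B) :
    ∃ r c, 0 ≤ r ∧ r < 1 ∧ 0 ≤ c ∧
      ∀ m, z (m + 1) + c * x (m + 1) ≤ r * (z m + c * x m) + (B + c * A) := by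
  set r := max q ((1 + p) / 2)
  have hpr : 0 < r - p := by linarith [le_max_right q ((1 + p) / 2)]
  refine ⟨r, b / (r - p), by positivity, max_lt hq1 (by linarith), by positivity, fun m => ?_⟩
  have hcoef : (b + b / (r - p) * p) * x m = r * (b / (r - p)) * x m := by field_simp; ring
  have hqr : q * z m ≤ r * z m := mul_le_mul_of_nonneg_right (le_max_left _ _) (hz m)
  linarith [hzx m, mul_le_mul_of_nonneg_left (hx m) (div_nonneg hb hpr.le)]

end Recursions

lemma abs_sub_sub_le_of_lipschitz {Y E : Type*} [NormedAddCommGroup Y] [NormedAddCommGroup E]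
    {h : Y → ℝ} {y ystar : Y} {χ : E} {η ε Lh : ℝ} (hLh : 0 ≤ Lh)
    (hLip : |h y - h ystar| ≤ Lh * ‖y - ystar‖) (hcomp : ‖y - ystar‖ ≤ ‖χ‖) (hη : |η| ≤ ε) :
    |h ystar - h y - η| ≤ Lh * ‖χ‖ + ε := by
  calc |h ystar - h y - η| = |(h y - h ystar) + η| := by rw [← abs_neg]; ring_nf
    _ ≤ Lh * ‖χ‖ + ε := (abs_add_le _ _).trans (add_le_add (hLip.trans (by gcongr)) hη)

theorem rapid_tracking_error_bound_general
    {E1 F H Y : Type*} [NormedAddCommGroup E1]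
    [NormedAddCommGroup F]
    [NormedAddCommGroup H] [InnerProductSpace ℝ H]
    [NormedAddCommGroup Y]
    (χ : ℕ → E1) (w : ℕ → F) (φ : ℕ → H)
    (Vy : E1 → ℝ) (b1 b2 b3 b4 b5 : ℝ)
    (hb1 : 0 < b1) (hb2 : 0 < b2) (hb3 : 0 < b3) (hb4 : 0 < b4) (hb5 : 0 < b5)
    (φstar : H)
    (hVlow : ∀ m, b1 * ‖χ m‖ ^ 2 ≤ Vy (χ m))
    (hVup : ∀ m, Vy (χ m) ≤ b2 * ‖χ m‖ ^ 2)
    (hVdec : ∀ m, Vy (χ (m + 1)) - Vy (χ m)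
      ≤ -b3 * ‖χ m‖ ^ 2 + b4 * ‖φ m - φstar‖ ^ 2 + b5 * ‖w m‖ ^ 2)
    (Φ : Set H) (hconv : Convex ℝ Φ)
    (hφstar : φstar ∈ Φ)
    (proj : H → H)
    (hproj : ∀ x, proj x ∈ Φ ∧ ∀ y ∈ Φ, ‖x - proj x‖ ≤ ‖x - y‖)
    (g r : ℕ → H) (hr : ∀ m, ‖r m‖ ≤ ‖w m‖)
    (α : ℕ → ℝ) (μ L αlo αhi : ℝ)
    (hL : 0 < L)
    (hαlo : 0 < αlo) (hαhi : αhi < 2 * μ / L ^ 2)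
    (hα : ∀ m, αlo ≤ α m ∧ α m ≤ αhi)
    (hupd : ∀ m, φ (m + 1) = proj (φ m - α m • (g m + r m)))
    (hmono : ∀ m, μ * ‖φ m - φstar‖ ^ 2 ≤ @inner ℝ H _ (g m) (φ m - φstar))
    (hgrow : ∀ m, ‖g m‖ ≤ L * ‖φ m - φstar‖)
    (h : Y → ℝ) (y : ℕ → Y) (ystar : Y) (ηt : ℕ → ℝ) (e : ℕ → ℝ)
    (he : ∀ m, e m = h ystar - h (y m) - ηt m)
    (Lh : ℝ) (hLh : 0 < Lh)
    (hLip : ∀ m, |h (y m) - h ystar| ≤ Lh * ‖y m - ystar‖)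
    (hcomp : ∀ m, ‖y m - ystar‖ ≤ ‖χ m‖)
    (hnoise : ∀ m, |ηt m| ≤ ‖w m‖)
    (hwbdd : BddAbove (Set.range fun j => ‖w j‖)) :
    ∃ Ce > (0 : ℝ),
      Filter.limsup (fun m => |e m|) Filter.atTop ≤ Ce * (⨆ j, ‖w j‖) := by
  set wb := ⨆ j, ‖w j‖
  have hw : ∀ m, ‖w m‖ ≤ wb := le_ciSup hwbdd
  have hwb : 0 ≤ wb := (norm_nonneg _).trans (hw 0)
  have hαhi0 : 0 ≤ αhi := hαlo.le.trans ((hα 0).1.trans (hα 0).2)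
  obtain ⟨κ, hκ0, hκ1, hgain⟩ := exists_norm_gain_error_le hconv hproj hφstar hL hαlo hαhi hα
    hupd hmono hgrow
  have hgain_sq (m : ℕ) :
      ‖φ (m + 1) - φstar‖ ^ 2 ≤ κ * ‖φ m - φstar‖ ^ 2 + (αhi * wb) ^ 2 / (1 - κ) :=
    (pow_le_pow_left₀ (norm_nonneg _) ((hgain m).trans (by grw [hr m, hw m])) 2).trans
      (sq_mul_add_le_of_lt_one hκ0 hκ1 _ _)
  have hV (m : ℕ) : 0 ≤ Vy (χ m) := (by positivity : 0 ≤ b1 * ‖χ m‖ ^ 2).trans (hVlow m)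
  have hplant (m : ℕ) : Vy (χ (m + 1)) ≤
      (1 - b3 / b2) * Vy (χ m) + b4 * ‖φ m - φstar‖ ^ 2 + b5 * wb ^ 2 := by
    rw [add_assoc]
    refine le_one_sub_div_mul_add_of_sub_le_s14 hb2 hb3.le (hVup m) ((hVdec m).trans ?_)
    grw [hw m]; rw [add_assoc]
  obtain ⟨ρ, c, hρ0, hρ1, hc, hW⟩ := exists_cascade_le_mul_add hκ0 hκ1
    (by linarith [div_pos hb3 hb2]) hb4.le hV hgain_sq hplant
  have he_le (m : ℕ) : |e m| ≤ Lh * √((Vy (χ m) + c * ‖φ m - φstar‖ ^ 2) / b1) + wb := by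
    rw [he m]
    refine (abs_sub_sub_le_of_lipschitz hLh.le (hLip m) (hcomp m)
      ((hnoise m).trans (hw m))).trans ?_
    gcongr
    refine Real.le_sqrt_of_sq_le ((le_div_iff₀ hb1).2 ?_)
    nlinarith [hVlow m, mul_nonneg hc (sq_nonneg ‖φ m - φstar‖)]
  set K := b5 + c * (αhi ^ 2 / (1 - κ))
  refine ⟨Lh * √(K / ((1 - ρ) * b1)) + 1, by positivity, ?_⟩
  calc limsup (fun m => |e m|) atTop ≤ Lh * √(K * wb ^ 2 / (1 - ρ) / b1) + wb :=
        limsup_le_of_le_mul_add (f := fun t => Lh * √(t / b1) + wb)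
          (fun s t hst => by dsimp only; gcongr) (by fun_prop) hρ0 hρ1 (by positivity)
          (fun m => (hW m).trans_eq (by ring)) (fun m => abs_nonneg _) he_le
    _ = (Lh * √(K / ((1 - ρ) * b1)) + 1) * wb := by
      rw [div_div, ← div_mul_eq_mul_div, Real.sqrt_mul' _ (sq_nonneg _), Real.sqrt_sq hwb]
      ring

/-- Theorem 2 (tracking-error bound for RAPID): under the plant, gain-update,
and output assumptions, if `w̄ := sup_j ‖w j‖` is finite, then there is a
constant `C_e > 0` such that `limsup_{m→∞} |e m| ≤ C_e·w̄`; the sampled RAPID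
tracking error is ultimately bounded by a disturbance-dependent constant. -/
theorem rapid_tracking_error_bound
    {E1 F H Y : Type*} [NormedAddCommGroup E1] [NormedSpace ℝ E1]
    [NormedAddCommGroup F] [NormedSpace ℝ F]
    [NormedAddCommGroup H] [InnerProductSpace ℝ H] [CompleteSpace H]
    [NormedAddCommGroup Y] [NormedSpace ℝ Y]
    (χ : ℕ → E1) (w : ℕ → F) (φ : ℕ → H)
    (Vy : E1 → ℝ) (b1 b2 b3 b4 b5 : ℝ)
    (hb1 : 0 < b1) (hb2 : 0 < b2) (hb3 : 0 < b3) (hb4 : 0 < b4) (hb5 : 0 < b5)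
    (φstar : H)
    (hVlow : ∀ m, b1 * ‖χ m‖ ^ 2 ≤ Vy (χ m))
    (hVup : ∀ m, Vy (χ m) ≤ b2 * ‖χ m‖ ^ 2)
    (hVdec : ∀ m, Vy (χ (m + 1)) - Vy (χ m)
      ≤ -b3 * ‖χ m‖ ^ 2 + b4 * ‖φ m - φstar‖ ^ 2 + b5 * ‖w m‖ ^ 2)
    (Φ : Set H) (hne : Φ.Nonempty) (hclosed : IsClosed Φ) (hconv : Convex ℝ Φ)
    (hφstar : φstar ∈ Φ) (hφ0 : φ 0 ∈ Φ)
    (proj : H → H)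
    (hproj : ∀ x, proj x ∈ Φ ∧ ∀ y ∈ Φ, ‖x - proj x‖ ≤ ‖x - y‖)
    (g r : ℕ → H) (hr : ∀ m, ‖r m‖ ≤ ‖w m‖)
    (α : ℕ → ℝ) (μ L αlo αhi : ℝ)
    (hμ : 0 < μ) (hL : 0 < L)
    (hαlo : 0 < αlo) (hαle : αlo ≤ αhi) (hαhi : αhi < 2 * μ / L ^ 2)
    (hα : ∀ m, αlo ≤ α m ∧ α m ≤ αhi)
    (hupd : ∀ m, φ (m + 1) = proj (φ m - α m • (g m + r m)))
    (hmono : ∀ m, μ * ‖φ m - φstar‖ ^ 2 ≤ @inner ℝ H _ (g m) (φ m - φstar))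
    (hgrow : ∀ m, ‖g m‖ ≤ L * ‖φ m - φstar‖)
    (h : Y → ℝ) (y : ℕ → Y) (ystar : Y) (ηt : ℕ → ℝ) (e : ℕ → ℝ)
    (he : ∀ m, e m = h ystar - h (y m) - ηt m)
    (Lh : ℝ) (hLh : 0 < Lh)
    (hLip : ∀ m, |h (y m) - h ystar| ≤ Lh * ‖y m - ystar‖)
    (hcomp : ∀ m, ‖y m - ystar‖ ≤ ‖χ m‖)
    (hnoise : ∀ m, |ηt m| ≤ ‖w m‖)
    (hwbdd : BddAbove (Set.range fun j => ‖w j‖)) :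
    ∃ Ce > (0 : ℝ),
      Filter.limsup (fun m => |e m|) Filter.atTop ≤ Ce * (⨆ j, ‖w j‖) :=
  rapid_tracking_error_bound_general χ w φ Vy b1 b2 b3 b4 b5 hb1 hb2 hb3 hb4 hb5 φstar hVlow hVup
    hVdec Φ hconv hφstar proj hproj g r hr α μ L αlo αhi hL hαlo hαhi hα hupd hmono hgrow h y ystar
    ηt e he Lh hLh hLip hcomp hnoise hwbdd
end

section
/- (Theorem 2, disturbance-free case.) Under the stated assumptions with w m = 0 for all m ∈ ℕ (hence r m = 0 for all m), there exist C1 > 0 and ρ ∈ (0,1) such that √(‖χ m‖² + ‖φ m − φ*‖²) ≤ C1·ρ^m·√(‖χ 0‖² + ‖φ 0 − φ*‖²) for all m ∈ ℕ; hence (χ m, φ m) converges exponentially to (0, φ*), i.e. the disturbance-free sampled RAPID equilibrium is exponentially stable. -/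
/-!
The gain error `‖φ m - φ*‖²` contracts geometrically on its own: the projection onto `Φ` does not
increase distances to `φ* ∈ Φ`, and a gradient step on a strongly monotone, linearly growing field
contracts by `1 - α (2μ - α L²) < 1`. The plant Lyapunov function then obeys
`V (m+1) ≤ (1 - b₃/b₂) V m + b₄ ‖φ m - φ*‖²`, and for a large enough weight `A` the combined function
`V + A ‖φ - φ*‖²` decays geometrically. It is comparable with `‖χ‖² + ‖φ - φ*‖²`, which gives the
exponential bound after taking square roots.
-/

open Set InnerProductSpace

section InnerProductSpace

variable {H : Type*} [NormedAddCommGroup H] [InnerProductSpace ℝ H]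

theorem real_inner_sub_nearest_nonpos {Φ : Set H} (hconv : Convex ℝ Φ) {x p y : H}
    (hp : p ∈ Φ) (hmin : ∀ z ∈ Φ, ‖x - p‖ ≤ ‖x - z‖) (hy : y ∈ Φ) :
    ⟪x - p, y - p⟫_ℝ ≤ 0 := by
  have : Nonempty Φ := ⟨⟨p, hp⟩⟩
  refine (norm_eq_iInf_iff_real_inner_le_zero hconv hp).1 ?_ y hy
  refine le_antisymm (le_ciInf fun z => hmin z z.2) (ciInf_le ?_ (⟨p, hp⟩ : Φ))
  exact ⟨0, by rintro _ ⟨z, rfl⟩; exact norm_nonneg _⟩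

theorem norm_nearest_sub_le {Φ : Set H} (hconv : Convex ℝ Φ) {x p y : H}
    (hp : p ∈ Φ) (hmin : ∀ z ∈ Φ, ‖x - p‖ ≤ ‖x - z‖) (hy : y ∈ Φ) :
    ‖p - y‖ ≤ ‖x - y‖ := by
  have hobtuse : 0 ≤ ⟪x - p, p - y⟫_ℝ := by
    rw [← neg_sub y p, inner_neg_right]
    linarith [real_inner_sub_nearest_nonpos hconv hp hmin hy]
  have hsq : ‖p - y‖ ^ 2 ≤ ‖x - y‖ * ‖p - y‖ :=
    calc ‖p - y‖ ^ 2 ≤ ⟪x - p, p - y⟫_ℝ + ⟪p - y, p - y⟫_ℝ := by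
          rw [real_inner_self_eq_norm_sq]; linarith
      _ = ⟪x - y, p - y⟫_ℝ := by rw [← inner_add_left, sub_add_sub_cancel]
      _ ≤ ‖x - y‖ * ‖p - y‖ := real_inner_le_norm _ _
  nlinarith [norm_nonneg (p - y), norm_nonneg (x - y)]

theorem norm_sub_smul_sq_le_of_strongly_monotone {v g : H} {α μ L : ℝ} (hα : 0 ≤ α)
    (hmono : μ * ‖v‖ ^ 2 ≤ ⟪g, v⟫_ℝ) (hgrow : ‖g‖ ≤ L * ‖v‖) :
    ‖v - α • g‖ ^ 2 ≤ (1 - α * (2 * μ - α * L ^ 2)) * ‖v‖ ^ 2 := by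
  have hexpand : ‖v - α • g‖ ^ 2 = ‖v‖ ^ 2 - 2 * (α * ⟪g, v⟫_ℝ) + α ^ 2 * ‖g‖ ^ 2 := by
    rw [norm_sub_sq_real, real_inner_smul_right, norm_smul, real_inner_comm, mul_pow,
      Real.norm_eq_abs, sq_abs]
  have hg : ‖g‖ ^ 2 ≤ L ^ 2 * ‖v‖ ^ 2 := by
    rw [← mul_pow]; exact pow_le_pow_left₀ (norm_nonneg g) hgrow 2
  rw [hexpand]
  nlinarith [mul_le_mul_of_nonneg_left hmono hα, mul_le_mul_of_nonneg_left hg (sq_nonneg α)]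

theorem norm_projected_gradient_step_sub_sq_le {Φ : Set H} (hconv : Convex ℝ Φ) {proj : H → H}
    (hproj : ∀ x, proj x ∈ Φ ∧ ∀ y ∈ Φ, ‖x - proj x‖ ≤ ‖x - y‖) {a x g : H} (ha : a ∈ Φ)
    {α μ L : ℝ} (hα : 0 ≤ α) (hmono : μ * ‖x - a‖ ^ 2 ≤ ⟪g, x - a⟫_ℝ)
    (hgrow : ‖g‖ ≤ L * ‖x - a‖) :
    ‖proj (x - α • g) - a‖ ^ 2 ≤ (1 - α * (2 * μ - α * L ^ 2)) * ‖x - a‖ ^ 2 := by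
  have hnonexp : ‖proj (x - α • g) - a‖ ≤ ‖(x - a) - α • g‖ := by
    rw [sub_right_comm]
    exact norm_nearest_sub_le hconv (hproj _).1 (hproj _).2 ha
  exact (pow_le_pow_left₀ (norm_nonneg _) hnonexp 2).trans
    (norm_sub_smul_sq_le_of_strongly_monotone hα hmono hgrow)

end InnerProductSpace

theorem gradient_step_factor_le {α αlo αhi μ L : ℝ} (hlo : 0 ≤ αlo) (hα : αlo ≤ α ∧ α ≤ αhi)
    (hhi : αhi * L ^ 2 ≤ 2 * μ) :
    1 - α * (2 * μ - α * L ^ 2) ≤ 1 - αlo * (2 * μ - αhi * L ^ 2) := by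
  have : αhi * L ^ 2 - α * L ^ 2 ≥ 0 := by nlinarith [sq_nonneg L]
  nlinarith

theorem lyapunov_step_le_of_dissipation {v v' s e b₂ b₃ : ℝ} (hb₂ : 0 < b₂) (hb₃ : 0 ≤ b₃)
    (hv : v ≤ b₂ * s) (hdec : v' - v ≤ -b₃ * s + e) :
    v' ≤ (1 - b₃ / b₂) * v + e := by
  have : b₃ / b₂ * v ≤ b₃ * s :=
    calc b₃ / b₂ * v ≤ b₃ / b₂ * (b₂ * s) := mul_le_mul_of_nonneg_left hv (by positivity)
      _ = b₃ * s := by field_simp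
  linarith

theorem exists_weighted_sum_le_geometric_of_cascade {V P : ℕ → ℝ} {c q b : ℝ}
    (hV : ∀ m, 0 ≤ V m) (hP : ∀ m, 0 ≤ P m) (hc : c < 1) (hq : q < 1) (hb : 0 ≤ b)
    (hVstep : ∀ m, V (m + 1) ≤ c * V m + b * P m) (hPstep : ∀ m, P (m + 1) ≤ q * P m) :
    ∃ A > 0, ∃ σ ∈ Ioo (0 : ℝ) 1, ∀ m, V m + A * P m ≤ σ ^ m * (V 0 + A * P 0) := by
  set ρ := max (max c q) 0
  have hcρ : c ≤ ρ := (le_max_left c q).trans (le_max_left _ 0)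
  have hqρ : q ≤ ρ := (le_max_right c q).trans (le_max_left _ 0)
  have hρ : 0 ≤ ρ ∧ ρ < 1 := ⟨le_max_right _ 0, max_lt (max_lt hc hq) one_pos⟩
  set σ := (1 + ρ) / 2 with hσdef
  have hσ : σ ∈ Ioo (0 : ℝ) 1 := ⟨by linarith, by linarith⟩
  have hcσ : c < σ := by linarith
  have hqσ : q < σ := by linarith
  -- `A (σ - q) = b + 1` is the weight that absorbs the input term `b P` into `σ A P`.
  set A := (b + 1) / (σ - q)
  have hA : 0 < A := div_pos (by linarith) (by linarith)
  have hAσ : b + A * q ≤ A * σ := by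
    have : A * (σ - q) = b + 1 := div_mul_cancel₀ _ (by linarith)
    linarith
  refine ⟨A, hA, σ, hσ, fun m => le_geom (u := fun k => V k + A * P k) hσ.1.le m fun k _ => ?_⟩
  calc V (k + 1) + A * P (k + 1) ≤ c * V k + (b + A * q) * P k := by
        nlinarith [hVstep k, hPstep k]
    _ ≤ σ * (V k + A * P k) := by
        nlinarith [mul_le_mul_of_nonneg_right hcσ.le (hV k), mul_le_mul_of_nonneg_right hAσ (hP k)]

theorem exists_sqrt_le_geometric_of_sandwich {S U : ℕ → ℝ} {k₁ k₂ σ : ℝ} (hk₁ : 0 < k₁)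
    (hk₂ : 0 < k₂) (hσ : σ ∈ Ioo (0 : ℝ) 1) (hlow : ∀ m, k₁ * S m ≤ U m) (hup : U 0 ≤ k₂ * S 0)
    (hU : ∀ m, U m ≤ σ ^ m * U 0) :
    ∃ C > 0, ∃ ρ ∈ Ioo (0 : ℝ) 1, ∀ m, √(S m) ≤ C * ρ ^ m * √(S 0) := by
  have hρ : √σ ∈ Ioo (0 : ℝ) 1 :=
    ⟨Real.sqrt_pos_of_pos hσ.1, (Real.sqrt_lt' one_pos).2 (by simpa using hσ.2)⟩
  refine ⟨√(k₂ / k₁), by positivity, √σ, hρ, fun m => ?_⟩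
  have hbound : S m ≤ k₂ / k₁ * σ ^ m * S 0 := by
    rw [div_mul_eq_mul_div, div_mul_eq_mul_div, le_div_iff₀ hk₁]
    nlinarith [hlow m, hU m, mul_le_mul_of_nonneg_left hup (pow_nonneg hσ.1.le m)]
  calc √(S m) ≤ √(k₂ / k₁ * σ ^ m * S 0) := Real.sqrt_le_sqrt hbound
    _ = √(k₂ / k₁) * √σ ^ m * √(S 0) := by
        have hpow : √(σ ^ m) = √σ ^ m := by
          rw [Real.sqrt_eq_iff_eq_sq (pow_nonneg hσ.1.le m) (pow_nonneg (Real.sqrt_nonneg σ) m),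
            ← pow_mul, mul_comm, pow_mul, Real.sq_sqrt hσ.1.le]
        rw [Real.sqrt_mul (by have := hσ.1; positivity), Real.sqrt_mul (by positivity), hpow]

theorem rapid_disturbance_free_exponential_general
    {E1 F H : Type*} [NormedAddCommGroup E1]
    [NormedAddCommGroup F]
    [NormedAddCommGroup H] [InnerProductSpace ℝ H]
    (χ : ℕ → E1) (w : ℕ → F) (φ : ℕ → H)
    (Vy : E1 → ℝ) (b1 b2 b3 b4 b5 : ℝ)
    (hb1 : 0 < b1) (hb2 : 0 < b2) (hb3 : 0 < b3) (hb4 : 0 < b4)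
    (φstar : H)
    (hVlow : ∀ m, b1 * ‖χ m‖ ^ 2 ≤ Vy (χ m))
    (hVup : ∀ m, Vy (χ m) ≤ b2 * ‖χ m‖ ^ 2)
    (hVdec : ∀ m, Vy (χ (m + 1)) - Vy (χ m)
      ≤ -b3 * ‖χ m‖ ^ 2 + b4 * ‖φ m - φstar‖ ^ 2 + b5 * ‖w m‖ ^ 2)
    (Φ : Set H) (hconv : Convex ℝ Φ)
    (hφstar : φstar ∈ Φ)
    (proj : H → H)
    (hproj : ∀ x, proj x ∈ Φ ∧ ∀ y ∈ Φ, ‖x - proj x‖ ≤ ‖x - y‖)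
    (g r : ℕ → H) (hr : ∀ m, ‖r m‖ ≤ ‖w m‖)
    (α : ℕ → ℝ) (μ L αlo αhi : ℝ)
    (hL : 0 < L)
    (hαlo : 0 < αlo) (hαhi : αhi < 2 * μ / L ^ 2)
    (hα : ∀ m, αlo ≤ α m ∧ α m ≤ αhi)
    (hupd : ∀ m, φ (m + 1) = proj (φ m - α m • (g m + r m)))
    (hmono : ∀ m, μ * ‖φ m - φstar‖ ^ 2 ≤ @inner ℝ H _ (g m) (φ m - φstar))
    (hgrow : ∀ m, ‖g m‖ ≤ L * ‖φ m - φstar‖)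
    (hw : ∀ m, w m = 0) :
    ∃ C1 > (0 : ℝ), ∃ ρ ∈ Set.Ioo (0 : ℝ) 1,
      ∀ m, Real.sqrt (‖χ m‖ ^ 2 + ‖φ m - φstar‖ ^ 2)
        ≤ C1 * ρ ^ m * Real.sqrt (‖χ 0‖ ^ 2 + ‖φ 0 - φstar‖ ^ 2) := by
  have hαL : αhi * L ^ 2 < 2 * μ := (lt_div_iff₀ (by positivity)).1 hαhi
  have hgain : ∀ m, ‖φ (m + 1) - φstar‖ ^ 2
      ≤ (1 - αlo * (2 * μ - αhi * L ^ 2)) * ‖φ m - φstar‖ ^ 2 := by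
    intro m
    have hr0 : r m = 0 := norm_le_zero_iff.mp (by simpa [hw m] using hr m)
    rw [hupd m, hr0, add_zero]
    exact (norm_projected_gradient_step_sub_sq_le hconv hproj hφstar (hαlo.le.trans (hα m).1)
      (hmono m) (hgrow m)).trans (mul_le_mul_of_nonneg_right
        (gradient_step_factor_le hαlo.le (hα m) hαL.le) (sq_nonneg _))
  have hplant : ∀ m, Vy (χ (m + 1)) ≤ (1 - b3 / b2) * Vy (χ m) + b4 * ‖φ m - φstar‖ ^ 2 :=
    fun m => lyapunov_step_le_of_dissipation hb2 hb3.le (hVup m) (by simpa [hw m] using hVdec m)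
  have hV : ∀ m, 0 ≤ Vy (χ m) := fun m => (by positivity : 0 ≤ b1 * ‖χ m‖ ^ 2).trans (hVlow m)
  obtain ⟨A, hA, σ, hσ, hU⟩ := exists_weighted_sum_le_geometric_of_cascade hV
    (fun m => sq_nonneg ‖φ m - φstar‖) (by linarith [div_pos hb3 hb2] : 1 - b3 / b2 < 1)
    (by nlinarith : 1 - αlo * (2 * μ - αhi * L ^ 2) < 1) hb4.le hplant hgain
  refine exists_sqrt_le_geometric_of_sandwich (lt_min hb1 hA) (hb2.trans_le (le_max_left b2 A))
    hσ (fun m => ?_) ?_ hU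
  · rw [mul_add]
    exact add_le_add ((mul_le_mul_of_nonneg_right (min_le_left _ _) (sq_nonneg _)).trans (hVlow m))
      (mul_le_mul_of_nonneg_right (min_le_right _ _) (sq_nonneg _))
  · rw [mul_add]
    exact add_le_add ((hVup 0).trans (mul_le_mul_of_nonneg_right (le_max_left _ _) (sq_nonneg _)))
      (mul_le_mul_of_nonneg_right (le_max_right _ _) (sq_nonneg _))

/-- Theorem 2 (disturbance-free case for RAPID): if `w m = 0` for all `m`
(hence `r m = 0` for all `m`), then there exist `C1 > 0` and `ρ ∈ (0,1)` such
that `√(‖χ m‖² + ‖φ m − φ*‖²) ≤ C1·ρ^m·√(‖χ 0‖² + ‖φ 0 − φ*‖²)` for all `m`;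
hence `(χ m, φ m)` converges exponentially to `(0, φ*)`, i.e. the
disturbance-free sampled RAPID equilibrium is exponentially stable. -/
theorem rapid_disturbance_free_exponential
    {E1 F H : Type*} [NormedAddCommGroup E1] [NormedSpace ℝ E1]
    [NormedAddCommGroup F] [NormedSpace ℝ F]
    [NormedAddCommGroup H] [InnerProductSpace ℝ H] [CompleteSpace H]
    (χ : ℕ → E1) (w : ℕ → F) (φ : ℕ → H)
    (Vy : E1 → ℝ) (b1 b2 b3 b4 b5 : ℝ)
    (hb1 : 0 < b1) (hb2 : 0 < b2) (hb3 : 0 < b3) (hb4 : 0 < b4) (hb5 : 0 < b5)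
    (φstar : H)
    (hVlow : ∀ m, b1 * ‖χ m‖ ^ 2 ≤ Vy (χ m))
    (hVup : ∀ m, Vy (χ m) ≤ b2 * ‖χ m‖ ^ 2)
    (hVdec : ∀ m, Vy (χ (m + 1)) - Vy (χ m)
      ≤ -b3 * ‖χ m‖ ^ 2 + b4 * ‖φ m - φstar‖ ^ 2 + b5 * ‖w m‖ ^ 2)
    (Φ : Set H) (hne : Φ.Nonempty) (hclosed : IsClosed Φ) (hconv : Convex ℝ Φ)
    (hφstar : φstar ∈ Φ) (hφ0 : φ 0 ∈ Φ)
    (proj : H → H)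
    (hproj : ∀ x, proj x ∈ Φ ∧ ∀ y ∈ Φ, ‖x - proj x‖ ≤ ‖x - y‖)
    (g r : ℕ → H) (hr : ∀ m, ‖r m‖ ≤ ‖w m‖)
    (α : ℕ → ℝ) (μ L αlo αhi : ℝ)
    (hμ : 0 < μ) (hL : 0 < L)
    (hαlo : 0 < αlo) (hαle : αlo ≤ αhi) (hαhi : αhi < 2 * μ / L ^ 2)
    (hα : ∀ m, αlo ≤ α m ∧ α m ≤ αhi)
    (hupd : ∀ m, φ (m + 1) = proj (φ m - α m • (g m + r m)))
    (hmono : ∀ m, μ * ‖φ m - φstar‖ ^ 2 ≤ @inner ℝ H _ (g m) (φ m - φstar))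
    (hgrow : ∀ m, ‖g m‖ ≤ L * ‖φ m - φstar‖)
    (hw : ∀ m, w m = 0) :
    ∃ C1 > (0 : ℝ), ∃ ρ ∈ Set.Ioo (0 : ℝ) 1,
      ∀ m, Real.sqrt (‖χ m‖ ^ 2 + ‖φ m - φstar‖ ^ 2)
        ≤ C1 * ρ ^ m * Real.sqrt (‖χ 0‖ ^ 2 + ‖φ 0 - φstar‖ ^ 2) :=
  rapid_disturbance_free_exponential_general χ w φ Vy b1 b2 b3 b4 b5 hb1 hb2 hb3 hb4 φstar hVlow
    hVup hVdec Φ hconv hφstar proj hproj g r hr α μ L αlo αhi hL hαlo hαhi hα hupd hmono hgrow hw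
end
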